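/- Let x0, x1, x3, α, β, μ ∈ ℂ with x0 ≠ 0, x1 ≠ 0, x3 ≠ 0, μ ≠ 0, and suppose (x0+x1+α)(x0−x1+α)(x0+x3−β)(x0−x3−β) = μ² · (x0+x1−α)(x0−x1−α)(x0+x3+β)(x0−x3+β). Define the 2×2 complex matrices N(x;b,a) := (1/(2x)) · [[−(x−a)², 1], [−(x+b)²(x−a)², (x+b)²]] and L := μ·N(x0;β,α) − μ⁻¹·N(x0;−β,−α), with entries L = [[L11, L12],[L21, L22]]. Then L21 + L22·x1² = x3²·(L11 + L12·x1²); equivalently, 1/x3² is obtained from 1/x1² by the Möbius transformation with matrix L. -/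

import Mathlib

open Matrix

/-- The rational degeneration of the matrix
`N(x;b,a) = (σ²(x+b)σ²(x−a)/σ(2x))·[[−℘(x+b), ℘(x+b)℘(x−a)],[−1, ℘(x−a)]]`,
with `σ(x) → x`, `℘(x) → 1/x²`. -/
noncomputable def Nrat (x b a : ℂ) : Matrix (Fin 2) (Fin 2) ℂ :=
  (1 / (2 * x)) •
    !![-(x - a) ^ 2, 1;
       -(x + b) ^ 2 * (x - a) ^ 2, (x + b) ^ 2]

/-- The rational degeneration of Lemma 3 of the paper: if
`F(x0,x1;α)/F(x0,x3;β) = μ²` for the rational leg function, then `1/x3²` is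
the Möbius transformation of `1/x1²` with matrix
`L = μ·N(x0;β,α) − μ⁻¹·N(x0;−β,−α)`. -/
theorem Nrat_Moebius_transformation
    (x0 x1 x3 α β μ : ℂ)
    (hx0 : x0 ≠ 0) (hx1 : x1 ≠ 0) (hx3 : x3 ≠ 0) (hμ : μ ≠ 0)
    (hF : (x0 + x1 + α) * (x0 - x1 + α) * (x0 + x3 - β) * (x0 - x3 - β) =
      μ ^ 2 * ((x0 + x1 - α) * (x0 - x1 - α) * (x0 + x3 + β) * (x0 - x3 + β))) :
    (μ • Nrat x0 β α - μ⁻¹ • Nrat x0 (-β) (-α)) 1 0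
        + (μ • Nrat x0 β α - μ⁻¹ • Nrat x0 (-β) (-α)) 1 1 * x1 ^ 2 =
      x3 ^ 2 * ((μ • Nrat x0 β α - μ⁻¹ • Nrat x0 (-β) (-α)) 0 0
        + (μ • Nrat x0 β α - μ⁻¹ • Nrat x0 (-β) (-α)) 0 1 * x1 ^ 2) := by
  simp only [Nrat, Matrix.sub_apply, Matrix.smul_apply, Matrix.of_apply,
    Matrix.cons_val_zero, Matrix.cons_val_one, Matrix.head_cons, Matrix.head_fin_const,
    smul_eq_mul]
  field_simp
  linear_combination hF
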